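/- arXiv:2406.19955 — 2 statements merged into one kernel-verified Lean document; each statement's English description precedes it below -/
import Mathlib

section
/- For every real number x ≥ 0 and every complex number λ satisfying λ² + λ + x = 0, the real part of λ satisfies Re λ ≤ −(1/2) · x/(1+x). -/
/-- For every real `x ≥ 0` and every complex `λ` with `λ² + λ + x = 0`,
one has `Re λ ≤ -(1/2) · x/(1+x)`. -/
theorem stmt3 (x : ℝ) (hx : 0 ≤ x) :
    ∀ l : ℂ, l ^ 2 + l + (x : ℂ) = 0 → l.re ≤ -(1 / 2) * (x / (1 + x)) := by
  intro l hl
  have hre := congrArg Complex.re hl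
  have him := congrArg Complex.im hl
  simp [Complex.add_re, Complex.add_im, pow_two, Complex.mul_re, Complex.mul_im] at hre him
  set a := l.re
  set b := l.im
  have h1x : (0:ℝ) < 1 + x := by linarith
  have h2 : (0:ℝ) < 2 * (1 + x) := by linarith
  rw [show -(1 / 2) * (x / (1 + x)) = -x / (2 * (1 + x)) by field_simp, le_div_iff₀ h2]
  rcases eq_or_ne b 0 with hb | hb
  · rw [hb] at hre
    simp at hre
    nlinarith [sq_nonneg a, sq_nonneg (a*x)]
  · have ha : a = -1/2 := by
      have : b * (2 * a + 1) = 0 := by ring_nf; ring_nf at him; linarith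
      rcases mul_eq_zero.mp this with h | h
      · exact absurd h hb
      · linarith
    rw [ha]; nlinarith
end

section
/- There exist universal constants C ≥ 1 and θ > 0 such that for every real number ρ ≥ 1 and all differentiable functions u, v : [0, ∞) → ℝ satisfying u'(t) = −ρ·v(t) and v'(t) = ρ·u(t) − v(t) for all t ≥ 0, one has u(t)² + v(t)² ≤ C·e^{−θ t}·(u(0)² + v(0)²) for all t ≥ 0. (A suitable Lyapunov functional is L(t) = u(t)² + v(t)² − (1/(2ρ))·u(t)·v(t).) -/
/-!
Only `v` is damped, but the cross term in `L = u² + v² - u v / (2ρ)` makes the dissipation coercive: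
along solutions `L' = -u²/2 - 3v²/2 + u v / (2ρ)`, where the `ρ` of the skew coupling cancels
against the `1/(2ρ)` weight. For `ρ ≥ 1` both `L` and `-L'` are comparable to `u² + v²` uniformly
in `ρ`, so `L' ≤ -L/5` and Grönwall gives decay of `L`, hence of `u² + v²`.
-/

open Real Set

theorem le_exp_mul_of_hasDerivAt_le_neg_mul {f f' : ℝ → ℝ} {θ : ℝ}
    (hf : ∀ t, 0 ≤ t → HasDerivAt f (f' t) t) (hbound : ∀ t, 0 ≤ t → f' t ≤ -θ * f t)
    {t : ℝ} (ht : 0 ≤ t) : f t ≤ exp (-θ * t) * f 0 := by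
  have h := le_gronwallBound_of_liminf_deriv_right_le (f' := f') (δ := f 0) (K := -θ) (ε := 0)
    (a := 0) (b := t)
    (fun s hs => (hf s hs.1).continuousAt.continuousWithinAt)
    (fun s hs _ hr => (hf s hs.1).hasDerivWithinAt.liminf_right_slope_le hr) le_rfl
    (fun s hs => by simpa using hbound s hs.1) t ⟨ht, le_rfl⟩
  rwa [sub_zero, gronwallBound_ε0, mul_comm] at h

noncomputable def hypocoerciveLyapunov (ρ x y : ℝ) : ℝ := x ^ 2 + y ^ 2 - x * y / (2 * ρ)

section Lyapunov

variable {ρ : ℝ}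

theorem abs_mul_div_two_mul_le (hρ : 1 ≤ ρ) (x y : ℝ) :
    |x * y / (2 * ρ)| ≤ (x ^ 2 + y ^ 2) / 4 := by
  have hxy : |x * y| ≤ (x ^ 2 + y ^ 2) / 2 := by
    rw [abs_le]
    constructor <;> nlinarith [sq_nonneg (x + y), sq_nonneg (x - y)]
  rw [abs_div, abs_of_pos (by positivity : (0 : ℝ) < 2 * ρ), div_le_iff₀ (by positivity)]
  nlinarith [abs_nonneg (x * y)]

theorem three_quarters_mul_le_hypocoerciveLyapunov (hρ : 1 ≤ ρ) (x y : ℝ) :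
    3 / 4 * (x ^ 2 + y ^ 2) ≤ hypocoerciveLyapunov ρ x y := by
  have := (abs_le.mp (abs_mul_div_two_mul_le hρ x y)).2
  unfold hypocoerciveLyapunov
  linarith

theorem hypocoerciveLyapunov_le (hρ : 1 ≤ ρ) (x y : ℝ) :
    hypocoerciveLyapunov ρ x y ≤ 5 / 4 * (x ^ 2 + y ^ 2) := by
  have := (abs_le.mp (abs_mul_div_two_mul_le hρ x y)).1
  unfold hypocoerciveLyapunov
  linarith

theorem hypocoerciveLyapunov_dissipation (hρ : 1 ≤ ρ) (x y : ℝ) :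
    -(x ^ 2 / 2) - 3 / 2 * y ^ 2 + x * y / (2 * ρ) ≤ -(1 / 5) * hypocoerciveLyapunov ρ x y := by
  have := (abs_le.mp (abs_mul_div_two_mul_le hρ x y)).2
  unfold hypocoerciveLyapunov
  linarith [sq_nonneg x, sq_nonneg y]

theorem hasDerivAt_hypocoerciveLyapunov (hρ : ρ ≠ 0) {u v : ℝ → ℝ} {t : ℝ}
    (hu : HasDerivAt u (-(ρ * v t)) t) (hv : HasDerivAt v (ρ * u t - v t) t) :
    HasDerivAt (fun s => hypocoerciveLyapunov ρ (u s) (v s))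
      (-(u t ^ 2 / 2) - 3 / 2 * v t ^ 2 + u t * v t / (2 * ρ)) t := by
  refine (((hu.pow 2).add (hv.pow 2)).sub ((hu.mul hv).div_const (2 * ρ))).congr_deriv ?_
  field_simp
  ring

end Lyapunov

/-- Hypocoercivity: there are universal constants `C ≥ 1` and `θ > 0` such that for every
`ρ ≥ 1` and all differentiable `u, v : [0,∞) → ℝ` with `u' = -ρ v` and `v' = ρ u - v`,
one has `u(t)² + v(t)² ≤ C e^{-θ t} (u(0)² + v(0)²)` for all `t ≥ 0`. -/
theorem stmt8 :
    ∃ C : ℝ, 1 ≤ C ∧ ∃ θ : ℝ, 0 < θ ∧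
      ∀ ρ : ℝ, 1 ≤ ρ → ∀ u v : ℝ → ℝ,
        (∀ t : ℝ, 0 ≤ t → HasDerivAt u (-(ρ * v t)) t) →
        (∀ t : ℝ, 0 ≤ t → HasDerivAt v (ρ * u t - v t) t) →
        ∀ t : ℝ, 0 ≤ t →
          u t ^ 2 + v t ^ 2 ≤ C * Real.exp (-θ * t) * (u 0 ^ 2 + v 0 ^ 2) := by
  refine ⟨5 / 3, by norm_num, 1 / 5, by norm_num, fun ρ hρ u v hu hv t ht => ?_⟩
  have hdecay := le_exp_mul_of_hasDerivAt_le_neg_mul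
    (fun s hs => hasDerivAt_hypocoerciveLyapunov (by positivity) (hu s hs) (hv s hs))
    (fun s _ => hypocoerciveLyapunov_dissipation hρ (u s) (v s)) ht
  calc u t ^ 2 + v t ^ 2 ≤ 4 / 3 * hypocoerciveLyapunov ρ (u t) (v t) := by
        linarith [three_quarters_mul_le_hypocoerciveLyapunov hρ (u t) (v t)]
    _ ≤ 4 / 3 * (exp (-(1 / 5) * t) * hypocoerciveLyapunov ρ (u 0) (v 0)) := by gcongr
    _ ≤ 4 / 3 * (exp (-(1 / 5) * t) * (5 / 4 * (u 0 ^ 2 + v 0 ^ 2))) := by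
        gcongr
        exact hypocoerciveLyapunov_le hρ (u 0) (v 0)
    _ = 5 / 3 * exp (-(1 / 5) * t) * (u 0 ^ 2 + v 0 ^ 2) := by ring
end
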